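/- For every n ≥ 4 there exist infinitely many roots r ∈ ℤ^n of F_n = 0 with 1 + s(r) > 0 (positive roots), no two of which are permutations of each other; similarly there exist infinitely many pairwise non-permutation-equivalent roots with 1 + s(r) < 0 (negative roots). Consequently, for n ≥ 4 the graph on solutions up to permutation has infinitely many positive components and infinitely many negative components. -/

import Mathlib

open Finset

def F {n : ℕ} (x : Fin n → ℤ) : ℤ :=
  (∑ i, x i) ^ 2 - (∑ i, x i) - 4 * ∑ i, ∑ j, if i < j then x i * x j else 0

def nbr {n : ℕ} (a : Fin n → ℤ) (k : Fin n) : Fin n → ℤ :=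
  Function.update a k (2 * (∑ i ∈ univ.erase k, a i) + 1 - a k)

def height {n : ℕ} (x : Fin n → ℤ) : ℤ := |1 + ∑ i, x i|

def IsRoot {n : ℕ} (a : Fin n → ℤ) : Prop := ∀ k, height a < height (nbr a k)

/-- Solutions of `F_n = 0` identified up to permutation of coordinates. -/
def permSetoid (n : ℕ) : Setoid {x : Fin n → ℤ // F x = 0} where
  r x y := ∃ σ : Equiv.Perm (Fin n), x.1 = y.1 ∘ σ
  iseqv := by
    constructor
    · exact fun x => ⟨Equiv.refl _, rfl⟩
    · rintro x y ⟨σ, h⟩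
      exact ⟨σ.symm, by funext i; simp [h]⟩
    · rintro x y z ⟨σ, h⟩ ⟨τ, h'⟩
      exact ⟨σ.trans τ, by funext i; simp [h, h']⟩

/-- The graph on solutions up to permutation: two classes are adjacent iff they are
distinct and have representatives differing in exactly one coordinate. -/
def solGraphQ (n : ℕ) : SimpleGraph (Quotient (permSetoid n)) where
  Adj C D := C ≠ D ∧ ∃ x y : {x : Fin n → ℤ // F x = 0},
    Quotient.mk (permSetoid n) x = C ∧ Quotient.mk (permSetoid n) y = D ∧
    ∃ k, x.1 k ≠ y.1 k ∧ ∀ i, i ≠ k → x.1 i = y.1 i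
  symm := ⟨by
    rintro C D ⟨hCD, x, y, hx, hy, k, hk, h⟩
    exact ⟨hCD.symm, y, x, hy, hx, k, hk.symm, fun i hi => (h i hi).symm⟩⟩
  loopless := ⟨by rintro C ⟨h, -⟩; exact h rfl⟩

/-!
For a solution `a` with `s = ∑ aᵢ`, the `k`-th neighbour has height `|3s + 2 - 4aₖ|` instead of
`|1 + s|`; the two never agree, and the neighbour is no higher only if `(2s + 1)² < 16 aₖ²`.
On the quadric `2 ∑ aᵢ² = s² + s`, so at most one coordinate satisfies this: descending
through neighbours is deterministic and ends at a root. The root reached is unchanged by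
neighbour moves and commutes with permutations. Since `F` is a monic quadratic in each
coordinate, an edge of the graph on permutation classes is a neighbour move (Vieta), so two
roots in the same component are permutations of each other. Finally
`(-a, a, 2a², 2a²)` and `(t, -1 - t, -c, -c)` with `c = t² + (t + 1)²` are positive,
resp. negative, roots with pairwise distinct coordinate sums, and padding them with zeros keeps
them roots because `(2s + 1)(4s + 3) > 0` for every integer `s`.
-/

open Function Relation

theorem sq_sum_eq_sum_sq_add_two_mul_sum_lt {ι R : Type*} [Fintype ι] [LinearOrder ι]
    [CommRing R] (f : ι → R) :
    (∑ i, f i) ^ 2 = ∑ i, f i ^ 2 + 2 * ∑ i, ∑ j, if i < j then f i * f j else 0 := by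
  have hsplit : ∀ i j, f i * f j = (if i < j then f i * f j else 0) +
      (if j < i then f j * f i else 0) + if i = j then f i * f j else 0 := by
    intro i j
    rcases lt_trichotomy i j with h | rfl | h
    · simp [h, h.not_gt, h.ne]
    · simp
    · simp [h, h.not_gt, h.ne', mul_comm]
  rw [sq, sum_mul_sum, sum_congr rfl fun i _ => sum_congr rfl fun j _ => hsplit i j]
  simp only [sum_add_distrib, sum_ite_eq, mem_univ, if_true]
  rw [sum_comm (f := fun i j => if j < i then f j * f i else 0)]
  simp only [sq]
  ring

section
variable {n : ℕ}

theorem F_eq_sum_sq (x : Fin n → ℤ) :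
    F x = 2 * ∑ i, x i ^ 2 - (∑ i, x i) ^ 2 - ∑ i, x i := by
  rw [F, sq_sum_eq_sum_sq_add_two_mul_sum_lt]
  ring

theorem F_eq_quadratic (x : Fin n → ℤ) (k : Fin n) :
    F x = x k ^ 2 - (2 * ∑ i ∈ univ.erase k, x i + 1) * x k +
      (2 * ∑ i ∈ univ.erase k, x i ^ 2 - (∑ i ∈ univ.erase k, x i) ^ 2 -
        ∑ i ∈ univ.erase k, x i) := by
  rw [F_eq_sum_sq, ← add_sum_erase _ (fun i => x i ^ 2) (mem_univ k),
    ← add_sum_erase _ _ (mem_univ k)]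
  ring

theorem F_comp_perm (x : Fin n → ℤ) (σ : Equiv.Perm (Fin n)) : F (x ∘ σ) = F x := by
  simp only [F_eq_sum_sq, comp_apply, Equiv.sum_comp σ (fun i => x i),
    Equiv.sum_comp σ (fun i => x i ^ 2)]

theorem height_comp_perm (x : Fin n → ℤ) (σ : Equiv.Perm (Fin n)) :
    height (x ∘ σ) = height x := by
  simp only [height, comp_apply, Equiv.sum_comp σ x]

theorem nbr_apply_self (a : Fin n → ℤ) (k : Fin n) :
    nbr a k k = 2 * ∑ i ∈ univ.erase k, a i + 1 - a k :=
  update_self ..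

theorem nbr_apply_of_ne (a : Fin n → ℤ) {k i : Fin n} (h : i ≠ k) : nbr a k i = a i :=
  update_of_ne h ..

theorem sum_erase_nbr {M : Type*} [AddCommMonoid M] (g : ℤ → M) (a : Fin n → ℤ) (k : Fin n) :
    ∑ i ∈ univ.erase k, g (nbr a k i) = ∑ i ∈ univ.erase k, g (a i) :=
  sum_congr rfl fun _ hi => by rw [nbr_apply_of_ne a (ne_of_mem_erase hi)]

theorem F_nbr (a : Fin n → ℤ) (k : Fin n) : F (nbr a k) = F a := by
  rw [F_eq_quadratic _ k, F_eq_quadratic a k, sum_erase_nbr (fun z => z),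
    sum_erase_nbr (fun z => z ^ 2), nbr_apply_self]
  ring

theorem nbr_nbr (a : Fin n → ℤ) (k : Fin n) : nbr (nbr a k) k = a := by
  funext i
  rcases eq_or_ne i k with rfl | h
  · rw [nbr_apply_self, sum_erase_nbr (fun z => z), nbr_apply_self]
    ring
  · rw [nbr_apply_of_ne _ h, nbr_apply_of_ne _ h]

theorem sum_nbr (a : Fin n → ℤ) (k : Fin n) :
    ∑ i, nbr a k i = 3 * ∑ i, a i + 1 - 4 * a k := by
  rw [← add_sum_erase _ _ (mem_univ k), sum_erase_nbr (fun z => z), nbr_apply_self,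
    sum_erase_eq_sub (mem_univ k)]
  ring

theorem nbr_comp_perm (a : Fin n → ℤ) (σ : Equiv.Perm (Fin n)) (k : Fin n) :
    nbr (a ∘ σ) k = nbr a (σ k) ∘ σ := by
  funext i
  rcases eq_or_ne i k with rfl | h
  · simp only [comp_apply, nbr_apply_self, sum_erase_eq_sub (mem_univ _),
      Equiv.sum_comp σ a]
  · rw [comp_apply, nbr_apply_of_ne _ h, nbr_apply_of_ne _ (σ.injective.ne h), comp_apply]

theorem height_nbr (a : Fin n → ℤ) (k : Fin n) :
    height (nbr a k) = |3 * ∑ i, a i + 2 - 4 * a k| := by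
  rw [height, sum_nbr]
  ring_nf

theorem height_lt_height_nbr_iff (a : Fin n → ℤ) (k : Fin n) :
    height a < height (nbr a k) ↔
      0 < (2 * ∑ i, a i + 1 - 4 * a k) * (4 * ∑ i, a i + 3 - 4 * a k) := by
  rw [height_nbr, height, ← sq_lt_sq, ← sub_pos]
  ring_nf

theorem isRoot_iff {a : Fin n → ℤ} :
    IsRoot a ↔ ∀ k, 0 < (2 * ∑ i, a i + 1 - 4 * a k) * (4 * ∑ i, a i + 3 - 4 * a k) :=
  forall_congr' (height_lt_height_nbr_iff a)

theorem height_nbr_ne (a : Fin n → ℤ) (k : Fin n) : height (nbr a k) ≠ height a := by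
  rw [height_nbr, height]
  intro h
  rcases abs_eq_abs.mp h with h | h <;> omega

theorem sq_lt_of_height_nbr_le {a : Fin n → ℤ} {k : Fin n} (h : height (nbr a k) ≤ height a) :
    (2 * ∑ i, a i + 1) ^ 2 < (4 * a k) ^ 2 := by
  set s := ∑ i, a i
  have hprod : (2 * s + 1 - 4 * a k) * (4 * s + 3 - 4 * a k) ≤ 0 :=
    not_lt.mp ((height_lt_height_nbr_iff a k).not.mp h.not_gt)
  rcases mul_nonpos_iff.mp hprod with ⟨h1, h2⟩ | ⟨h1, h2⟩
  · have : 4 * s + 3 < 4 * a k ∧ 4 * a k < 2 * s + 1 := by omega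
    nlinarith
  · have : 2 * s + 1 < 4 * a k ∧ 4 * a k < 4 * s + 3 := by omega
    nlinarith

theorem eq_of_height_nbr_le {a : Fin n → ℤ} (ha : F a = 0) {k j : Fin n}
    (hk : height (nbr a k) ≤ height a) (hj : height (nbr a j) ≤ height a) : k = j := by
  by_contra hkj
  have hpair : a k ^ 2 + a j ^ 2 ≤ ∑ i, a i ^ 2 :=
    add_le_sum (fun i _ => sq_nonneg (a i)) (mem_univ k) (mem_univ j) hkj
  have hk' := sq_lt_of_height_nbr_le hk
  have hj' := sq_lt_of_height_nbr_le hj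
  rw [F_eq_sum_sq] at ha
  nlinarith

theorem eq_nbr_of_eq_off {x y : Fin n → ℤ} (hx : F x = 0) (hy : F y = 0) {k : Fin n}
    (hk : x k ≠ y k) (hoff : ∀ i, i ≠ k → x i = y i) : y = nbr x k := by
  have hsum : ∀ g : ℤ → ℤ, ∑ i ∈ univ.erase k, g (y i) = ∑ i ∈ univ.erase k, g (x i) :=
    fun g => sum_congr rfl fun i hi => by rw [hoff i (ne_of_mem_erase hi)]
  rw [F_eq_quadratic _ k] at hx hy
  rw [hsum (fun z => z), hsum (fun z => z ^ 2)] at hy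
  have vieta : (x k - y k) * (x k + y k - (2 * ∑ i ∈ univ.erase k, x i + 1)) = 0 := by
    linear_combination hx - hy
  have hyk := (mul_eq_zero.mp vieta).resolve_left (sub_ne_zero.mpr hk)
  funext i
  rcases eq_or_ne i k with rfl | h
  · rw [nbr_apply_self]
    linarith
  · rw [nbr_apply_of_ne _ h, hoff i h]

def DescentStep (x y : Fin n → ℤ) : Prop :=
  F x = 0 ∧ ∃ k, y = nbr x k ∧ height y < height x

theorem descentStep_rightUnique : Relator.RightUnique (DescentStep (n := n)) := by
  rintro x _ _ ⟨hx, k, rfl, hk⟩ ⟨-, j, rfl, hj⟩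
  rw [eq_of_height_nbr_le hx hk.le hj.le]

theorem DescentStep.comp_perm {x y : Fin n → ℤ} (h : DescentStep x y) (σ : Equiv.Perm (Fin n)) :
    DescentStep (x ∘ σ) (y ∘ σ) := by
  obtain ⟨hx, k, rfl, hk⟩ := h
  refine ⟨by rwa [F_comp_perm], σ.symm k, ?_, ?_⟩
  · rw [nbr_comp_perm, Equiv.apply_symm_apply]
  · rwa [height_comp_perm, height_comp_perm]

theorem IsRoot.comp_perm {r : Fin n → ℤ} (hr : IsRoot r) (σ : Equiv.Perm (Fin n)) :
    IsRoot (r ∘ σ) := fun k => by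
  rw [nbr_comp_perm, height_comp_perm, height_comp_perm]
  exact hr (σ k)

theorem IsRoot.eq_of_reflTransGen {r y : Fin n → ℤ} (hr : IsRoot r)
    (h : ReflTransGen DescentStep r y) : r = y := by
  rcases h.cases_head with h | ⟨_, ⟨-, k, rfl, hk⟩, -⟩
  · exact h
  · exact absurd (hr k) hk.not_gt

theorem F_eq_zero_of_reflTransGen {x y : Fin n → ℤ} (h : ReflTransGen DescentStep x y)
    (hx : F x = 0) : F y = 0 := by
  induction h with
  | refl => exact hx
  | tail _ hyz _ => obtain ⟨hy, k, rfl, -⟩ := hyz; rwa [F_nbr]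

theorem exists_reflTransGen_isRoot {x : Fin n → ℤ} (hx : F x = 0) :
    ∃ r, ReflTransGen DescentStep x r ∧ IsRoot r := by
  by_cases hroot : IsRoot x
  · exact ⟨x, .refl, hroot⟩
  obtain ⟨k, hk⟩ : ∃ k, height (nbr x k) < height x := by
    simp only [IsRoot, not_forall, not_lt] at hroot
    obtain ⟨k, hk⟩ := hroot
    exact ⟨k, hk.lt_of_ne (height_nbr_ne x k)⟩
  obtain ⟨r, hxr, hr⟩ := exists_reflTransGen_isRoot (x := nbr x k) (by rwa [F_nbr])
  exact ⟨r, .head ⟨hx, k, rfl, hk⟩ hxr, hr⟩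
termination_by (height x).toNat
decreasing_by have : 0 ≤ height (nbr x k) := abs_nonneg _; omega

theorem eq_of_reflTransGen_isRoot {x r₁ r₂ : Fin n → ℤ} (h₁ : ReflTransGen DescentStep x r₁)
    (hr₁ : IsRoot r₁) (h₂ : ReflTransGen DescentStep x r₂) (hr₂ : IsRoot r₂) : r₁ = r₂ := by
  rcases ReflTransGen.total_of_right_unique descentStep_rightUnique h₁ h₂ with h | h
  · exact hr₁.eq_of_reflTransGen h
  · exact (hr₂.eq_of_reflTransGen h).symm

noncomputable def root (x : Fin n → ℤ) (hx : F x = 0) : Fin n → ℤ :=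
  (exists_reflTransGen_isRoot hx).choose

theorem reflTransGen_root {x : Fin n → ℤ} (hx : F x = 0) :
    ReflTransGen DescentStep x (root x hx) :=
  (exists_reflTransGen_isRoot hx).choose_spec.1

theorem isRoot_root {x : Fin n → ℤ} (hx : F x = 0) : IsRoot (root x hx) :=
  (exists_reflTransGen_isRoot hx).choose_spec.2

theorem F_root {x : Fin n → ℤ} (hx : F x = 0) : F (root x hx) = 0 :=
  F_eq_zero_of_reflTransGen (reflTransGen_root hx) hx

theorem root_eq_of_reflTransGen {x r : Fin n → ℤ} (hx : F x = 0)
    (h : ReflTransGen DescentStep x r) (hr : IsRoot r) : root x hx = r :=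
  eq_of_reflTransGen_isRoot (reflTransGen_root hx) (isRoot_root hx) h hr

theorem root_of_isRoot {x : Fin n → ℤ} (hx : F x = 0) (hr : IsRoot x) : root x hx = x :=
  root_eq_of_reflTransGen hx .refl hr

theorem root_comp_perm {x : Fin n → ℤ} (hx : F x = 0) (σ : Equiv.Perm (Fin n))
    (hxσ : F (x ∘ σ) = 0) : root (x ∘ σ) hxσ = root x hx ∘ σ :=
  root_eq_of_reflTransGen hxσ
    (ReflTransGen.lift (· ∘ σ) (fun _ _ h => h.comp_perm σ) _ _ (reflTransGen_root hx))
    ((isRoot_root hx).comp_perm σ)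

theorem root_nbr {x : Fin n → ℤ} (hx : F x = 0) (k : Fin n) (hxk : F (nbr x k) = 0) :
    root (nbr x k) hxk = root x hx := by
  rcases (height_nbr_ne x k).lt_or_gt with hlt | hgt
  · exact (root_eq_of_reflTransGen hx (.head ⟨hx, k, rfl, hlt⟩ (reflTransGen_root hxk))
      (isRoot_root hxk)).symm
  · have hstep : DescentStep (nbr x k) x := ⟨hxk, k, (nbr_nbr x k).symm, hgt⟩
    exact root_eq_of_reflTransGen hxk (.head hstep (reflTransGen_root hx)) (isRoot_root hx)

noncomputable def rootClass : Quotient (permSetoid n) → Quotient (permSetoid n) :=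
  Quotient.lift (fun x => Quotient.mk (permSetoid n) ⟨root x.1 x.2, F_root x.2⟩) <| by
    rintro ⟨x, hx⟩ ⟨y, hy⟩ ⟨σ, rfl⟩
    exact Quotient.sound ⟨σ, root_comp_perm hy σ hx⟩

theorem rootClass_mk (x : {x : Fin n → ℤ // F x = 0}) :
    rootClass (Quotient.mk (permSetoid n) x) =
      Quotient.mk (permSetoid n) ⟨root x.1 x.2, F_root x.2⟩ :=
  rfl

theorem rootClass_mk_of_isRoot {x : {x : Fin n → ℤ // F x = 0}} (hx : IsRoot x.1) :
    rootClass (Quotient.mk (permSetoid n) x) = Quotient.mk (permSetoid n) x := by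
  rw [rootClass_mk]
  exact congrArg _ (Subtype.ext (root_of_isRoot x.2 hx))

theorem rootClass_eq_of_adj {C D : Quotient (permSetoid n)} (h : (solGraphQ n).Adj C D) :
    rootClass C = rootClass D := by
  obtain ⟨-, ⟨x, hx⟩, ⟨y, hy⟩, rfl, rfl, k, hk, hoff⟩ := h
  obtain rfl := eq_nbr_of_eq_off hx hy hk hoff
  rw [rootClass_mk, rootClass_mk]
  exact congrArg _ (Subtype.ext (root_nbr hx k hy).symm)

theorem rootClass_eq_of_reachable {C D : Quotient (permSetoid n)}
    (h : (solGraphQ n).Reachable C D) : rootClass C = rootClass D := by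
  rw [SimpleGraph.reachable_iff_reflTransGen] at h
  induction h with
  | refl => rfl
  | tail _ hadj ih => exact ih.trans (rootClass_eq_of_adj hadj)

theorem exists_perm_of_isRoot_of_connectedComponentMk_eq {x y : {x : Fin n → ℤ // F x = 0}}
    (hx : IsRoot x.1) (hy : IsRoot y.1)
    (h : (solGraphQ n).connectedComponentMk (Quotient.mk (permSetoid n) x) =
      (solGraphQ n).connectedComponentMk (Quotient.mk (permSetoid n) y)) :
    ∃ σ : Equiv.Perm (Fin n), x.1 = y.1 ∘ σ := by
  have := rootClass_eq_of_reachable (SimpleGraph.ConnectedComponent.exact h)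
  rw [rootClass_mk_of_isRoot hx, rootClass_mk_of_isRoot hy] at this
  exact Quotient.exact this

theorem infinite_components_of_roots (P : ℤ → Prop)
    (h : ∃ f : ℕ → (Fin n → ℤ), (∀ i, F (f i) = 0 ∧ IsRoot (f i) ∧ P (1 + ∑ j, f i j)) ∧
      ∀ i j, (∃ σ : Equiv.Perm (Fin n), f i = f j ∘ σ) → i = j) :
    {C : (solGraphQ n).ConnectedComponent |
      ∃ x : {x : Fin n → ℤ // F x = 0}, P (1 + ∑ j, x.1 j) ∧
        (solGraphQ n).connectedComponentMk (Quotient.mk (permSetoid n) x) = C}.Infinite := by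
  obtain ⟨f, hf, hinj⟩ := h
  refine Set.infinite_of_injective_forall_mem
    (f := fun i => (solGraphQ n).connectedComponentMk (Quotient.mk _ ⟨f i, (hf i).1⟩))
    (fun i j hij => hinj i j ?_) (fun i => ⟨_, (hf i).2.2, rfl⟩)
  exact exists_perm_of_isRoot_of_connectedComponentMk_eq (x := ⟨f i, (hf i).1⟩)
    (y := ⟨f j, (hf j).1⟩) (hf i).2.1 (hf j).2.1 hij

end

section
variable {k m : ℕ}

theorem sum_append_zero (v : Fin k → ℤ) : ∑ i, Fin.append v (0 : Fin m → ℤ) i = ∑ i, v i := by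
  simp [Fin.sum_univ_add]

theorem F_append_zero (v : Fin k → ℤ) : F (Fin.append v (0 : Fin m → ℤ)) = F v := by
  simp [F_eq_sum_sq, Fin.sum_univ_add]

theorem IsRoot.append_zero {v : Fin k → ℤ} (hv : IsRoot v) :
    IsRoot (Fin.append v (0 : Fin m → ℤ)) := by
  rw [isRoot_iff] at hv ⊢
  rw [sum_append_zero]
  refine Fin.addCases (fun i => ?_) (fun i => ?_)
  · rw [Fin.append_left]
    exact hv i
  · rw [Fin.append_right, Pi.zero_apply, mul_zero, sub_zero, sub_zero]
    rcases le_or_gt 0 (∑ i, v i) with hs | hs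
    · exact mul_pos (by omega) (by omega)
    · exact mul_pos_of_neg_of_neg (by omega) (by omega)

theorem exists_roots_of_injective_sum (P : ℤ → Prop) (g : ℕ → Fin k → ℤ)
    (hg : ∀ i, F (g i) = 0 ∧ IsRoot (g i) ∧ P (1 + ∑ j, g i j))
    (hinj : Injective fun i => ∑ j, g i j) :
    ∃ f : ℕ → (Fin (k + m) → ℤ), (∀ i, F (f i) = 0 ∧ IsRoot (f i) ∧ P (1 + ∑ j, f i j)) ∧
      ∀ i j, (∃ σ : Equiv.Perm (Fin (k + m)), f i = f j ∘ σ) → i = j := by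
  refine ⟨fun i => Fin.append (g i) 0, fun i => ?_, ?_⟩
  · rw [F_append_zero, sum_append_zero]
    exact ⟨(hg i).1, (hg i).2.1.append_zero, (hg i).2.2⟩
  · rintro i j ⟨σ, h⟩
    apply hinj
    simpa only [sum_append_zero, comp_apply, Equiv.sum_comp σ] using
      congrArg (fun v => ∑ j, v j) h

end

def posRoot (a : ℤ) : Fin 4 → ℤ := ![-a, a, 2 * a ^ 2, 2 * a ^ 2]

def negRoot (t : ℤ) : Fin 4 → ℤ :=
  ![t, -1 - t, -(t ^ 2 + (t + 1) ^ 2), -(t ^ 2 + (t + 1) ^ 2)]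

theorem sum_posRoot (a : ℤ) : ∑ i, posRoot a i = 4 * a ^ 2 := by
  simp only [posRoot, Fin.sum_univ_four, Matrix.cons_val_zero, Matrix.cons_val_one,
    Matrix.cons_val]
  ring

theorem one_add_sum_posRoot_pos (a : ℤ) : 0 < 1 + ∑ i, posRoot a i := by
  rw [sum_posRoot]
  positivity

theorem F_posRoot (a : ℤ) : F (posRoot a) = 0 := by
  simp only [F_eq_sum_sq, posRoot, Fin.sum_univ_four, Matrix.cons_val_zero, Matrix.cons_val_one,
    Matrix.cons_val]
  ring

theorem isRoot_posRoot (a : ℤ) : IsRoot (posRoot a) := by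
  rw [isRoot_iff, sum_posRoot]
  intro k
  fin_cases k <;>
    simp only [posRoot, Fin.zero_eta, Fin.mk_one, Fin.reduceFinMk, Matrix.cons_val_zero,
      Matrix.cons_val_one, Matrix.cons_val] <;>
    apply mul_pos <;> nlinarith [sq_nonneg (2 * a - 1), sq_nonneg (2 * a + 1)]

theorem sum_negRoot (t : ℤ) : ∑ i, negRoot t i = -(4 * t ^ 2 + 4 * t + 3) := by
  simp only [negRoot, Fin.sum_univ_four, Matrix.cons_val_zero, Matrix.cons_val_one,
    Matrix.cons_val]
  ring

theorem one_add_sum_negRoot_neg (t : ℤ) : 1 + ∑ i, negRoot t i < 0 := by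
  rw [sum_negRoot]
  nlinarith [sq_nonneg (2 * t + 1)]

theorem F_negRoot (t : ℤ) : F (negRoot t) = 0 := by
  simp only [F_eq_sum_sq, negRoot, Fin.sum_univ_four, Matrix.cons_val_zero, Matrix.cons_val_one,
    Matrix.cons_val]
  ring

theorem isRoot_negRoot (t : ℤ) : IsRoot (negRoot t) := by
  rw [isRoot_iff, sum_negRoot]
  intro k
  fin_cases k <;>
    simp only [negRoot, Fin.zero_eta, Fin.mk_one, Fin.reduceFinMk, Matrix.cons_val_zero,
      Matrix.cons_val_one, Matrix.cons_val] <;>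
    apply mul_pos_of_neg_of_neg <;> nlinarith [sq_nonneg (2 * t + 1), sq_nonneg (4 * t + 3)]

/-- For `n ≥ 4` there are infinitely many pairwise non-permutation-equivalent positive
roots, and infinitely many pairwise non-permutation-equivalent negative roots, of
`F_n = 0`; consequently the graph on solutions up to permutation has infinitely many
positive components and infinitely many negative components. -/
theorem stmt_8 (n : ℕ) (hn : 4 ≤ n) :
    (∃ f : ℕ → (Fin n → ℤ),
      (∀ i, F (f i) = 0 ∧ IsRoot (f i) ∧ 0 < 1 + ∑ j, f i j) ∧
      ∀ i j, (∃ σ : Equiv.Perm (Fin n), f i = f j ∘ σ) → i = j) ∧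
    (∃ f : ℕ → (Fin n → ℤ),
      (∀ i, F (f i) = 0 ∧ IsRoot (f i) ∧ 1 + ∑ j, f i j < 0) ∧
      ∀ i j, (∃ σ : Equiv.Perm (Fin n), f i = f j ∘ σ) → i = j) ∧
    {C : (solGraphQ n).ConnectedComponent |
      ∃ x : {x : Fin n → ℤ // F x = 0}, 0 < 1 + ∑ j, x.1 j ∧
        (solGraphQ n).connectedComponentMk (Quotient.mk (permSetoid n) x) = C}.Infinite ∧
    {C : (solGraphQ n).ConnectedComponent |
      ∃ x : {x : Fin n → ℤ // F x = 0}, 1 + ∑ j, x.1 j < 0 ∧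
        (solGraphQ n).connectedComponentMk (Quotient.mk (permSetoid n) x) = C}.Infinite := by
  obtain ⟨m, rfl⟩ := Nat.exists_eq_add_of_le hn
  have hpos := exists_roots_of_injective_sum (m := m) (0 < ·) (fun a : ℕ => posRoot a)
    (fun a => ⟨F_posRoot a, isRoot_posRoot a, one_add_sum_posRoot_pos a⟩)
    (fun a b h => by simpa [sum_posRoot] using h)
  have hneg := exists_roots_of_injective_sum (m := m) (· < 0) (fun t : ℕ => negRoot t)
    (fun t => ⟨F_negRoot t, isRoot_negRoot t, one_add_sum_negRoot_neg t⟩)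
    (fun s t h => by simp only [sum_negRoot] at h; nlinarith)
  exact ⟨hpos, hneg, infinite_components_of_roots (0 < ·) hpos,
    infinite_components_of_roots (· < 0) hneg⟩
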